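/- arXiv:2306.05859 — 4 statements merged into one kernel-verified Lean document; each statement's English description precedes it below -/
import Mathlib

section
/- Let S be a nonempty finite set, let q be a probability distribution on S with q(s) > 0 for all s, let v : S → ℝ, β ≥ 0, κ > 0 and ω ∈ ℝ. Define p(s) = q(s)·exp(−(v(s)−ω)/κ), and suppose ∑_{s∈S} p(s) = 1 and ∑_{s∈S} p(s)·(−(v(s)−ω)/κ) = β. Then for every probability distribution p' on S with D(p'‖q) ≤ β, one has ∑_{s∈S} p(s)·v(s) ≤ ∑_{s∈S} p'(s)·v(s); that is, the exponentially tilted distribution p minimizes the expected value ⟨p', v⟩ over the KL ball of radius β around q. -/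
/-- The exponentially tilted distribution `p(s) = q(s)·exp(−(v(s)−ω)/κ)`
(assumed normalized and with KL divergence from `q` equal to `β`) minimizes the
expected value `⟨p', v⟩` over the KL ball of radius `β` around `q`. -/
theorem tilted_minimizes_expected_value_over_KL_ball
    {S : Type*} [Fintype S] [Nonempty S]
    (q : S → ℝ) (hq_pos : ∀ s, 0 < q s) (hq_sum : ∑ s, q s = 1)
    (v : S → ℝ) (β : ℝ) (hβ : 0 ≤ β) (κ : ℝ) (hκ : 0 < κ) (ω : ℝ)
    (p : S → ℝ) (hp_def : ∀ s, p s = q s * Real.exp (-(v s - ω) / κ))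
    (hp_sum : ∑ s, p s = 1)
    (hp_kl : ∑ s, p s * (-(v s - ω) / κ) = β)
    (p' : S → ℝ) (hp'_nonneg : ∀ s, 0 ≤ p' s) (hp'_sum : ∑ s, p' s = 1)
    (hp'_ball : ∑ s, p' s * Real.log (p' s / q s) ≤ β) :
    ∑ s, p s * v s ≤ ∑ s, p' s * v s := by
  have hp_pos : ∀ s, 0 < p s := fun s => by
    rw [hp_def s]; exact mul_pos (hq_pos s) (Real.exp_pos _)
  -- pointwise lower bound on p' log(p'/q)
  have hc : ∀ s, p' s - p s + p' s * (-(v s - ω) / κ) ≤ p' s * Real.log (p' s / q s) := by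
    intro s
    rcases eq_or_lt_of_le (hp'_nonneg s) with h | h
    · rw [← h]; simp; linarith [hp_pos s]
    · have hlog : Real.log (p' s / q s) = Real.log (p' s / p s) + (-(v s - ω) / κ) := by
        rw [Real.log_div (ne_of_gt h) (ne_of_gt (hq_pos s)),
            Real.log_div (ne_of_gt h) (ne_of_gt (hp_pos s)), hp_def s,
            Real.log_mul (ne_of_gt (hq_pos s)) (Real.exp_ne_zero _), Real.log_exp]
        ring
      have key : p' s - p s ≤ p' s * Real.log (p' s / p s) := by
        have h1 := Real.log_le_sub_one_of_pos (div_pos (hp_pos s) h)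
        have h2 : Real.log (p s / p' s) = - Real.log (p' s / p s) := by
          rw [← Real.log_inv]; congr 1; field_simp
        rw [h2] at h1
        have h3 := mul_le_mul_of_nonneg_left h1 (le_of_lt h)
        have h4 : p' s * (p s / p' s - 1) = p s - p' s := by field_simp
        nlinarith
      rw [hlog]; nlinarith
  have hsum : ∑ s, (p' s - p s + p' s * (-(v s - ω) / κ)) ≤ ∑ s, p' s * Real.log (p' s / q s) :=
    Finset.sum_le_sum (fun s _ => hc s)
  rw [Finset.sum_add_distrib, Finset.sum_sub_distrib, hp'_sum, hp_sum] at hsum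
  -- so ∑ p' c ≤ β
  have h5 : ∑ s, p' s * (-(v s - ω) / κ) ≤ β := by linarith
  -- expand both sums
  have hterm : ∀ (f : S → ℝ), ∑ s, f s * (-(v s - ω) / κ) = (ω * (∑ s, f s) - ∑ s, f s * v s) / κ := by
    intro f
    rw [Finset.mul_sum, ← Finset.sum_sub_distrib, Finset.sum_div]
    apply Finset.sum_congr rfl; intro s _; field_simp; ring
  have e1 := hterm p'
  have e2 := hterm p
  rw [hp'_sum] at e1
  rw [hp_sum, hp_kl] at e2
  rw [e1, e2, div_le_div_iff₀ hκ hκ] at h5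
  nlinarith
end

section
/- Let S and A be nonempty finite sets, π a policy, R : S×A → ℝ a reward, γ ∈ [0,1), P̄ a transition kernel with P̄(s'|s,a) > 0 for all s, a, s', and β : S×A → ℝ with β(s,a) ≥ 0. Let 𝒫 be the sa-rectangular KL uncertainty set consisting of all transition kernels P with D(P(·|s,a)‖P̄(·|s,a)) ≤ β(s,a) for every (s,a). Suppose κ : S×A → ℝ with κ(s,a) > 0, ω : S×A → ℝ, and v* : S → ℝ are such that the kernel P*(s'|s,a) = P̄(s'|s,a)·exp(−(v*(s')−ω(s,a))/κ(s,a)) satisfies, for every (s,a): ∑_{s'} P*(s'|s,a) = 1 and ∑_{s'} P*(s'|s,a)·(−(v*(s')−ω(s,a))/κ(s,a)) = β(s,a), and moreover T_{P*} v* = v*. Then P* belongs to 𝒫, and for every kernel P ∈ 𝒫 and every w : S → ℝ with T_P w = w one has v*(s) ≤ w(s) for all s ∈ S; consequently ∑_s μ(s)·v*(s) ≤ ∑_s μ(s)·w(s) for every probability distribution μ on S, i.e., P* is an adversarial (worst-case) kernel for the KL uncertainty set. -/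
/-- The Bellman operator of kernel `P` for policy `π`:
`(T_P v)(s) = ∑ a, π(a|s)·(R(s,a) + γ·∑ s', P(s'|s,a)·v(s'))`. -/
noncomputable def bellman {S A : Type*} [Fintype S] [Fintype A]
    (π : S → A → ℝ) (R : S → A → ℝ) (γ : ℝ) (P : S → A → S → ℝ)
    (v : S → ℝ) : S → ℝ :=
  fun s => ∑ a, π s a * (R s a + γ * ∑ s', P s a s' * v s')

/-!
The tilted kernel satisfies `v*(s') = ω(s,a) - κ(s,a)·log(P*(s'|s,a)/P̄(s'|s,a))`, so for any
distribution `p` the expected next value is `ω - κ·(D(p‖P̄) - D(p‖P*))`. By Gibbs' inequality this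
is at least `ω - κ·D(p‖P̄) ≥ ω - κ·β`, the value attained by `P*`. Hence `T_{P*} v* ≤ T_P v*`
for every `P` in the uncertainty set, i.e. `v* ≤ T_P v*`, and since `T_P` is a `γ`-contraction
in the sup norm, `v*` lies below the fixed point of `T_P`.
-/

open Finset

section KL

variable {S : Type*} [Fintype S]

noncomputable def discreteKL (p q : S → ℝ) : ℝ := ∑ s, p s * Real.log (p s / q s)

lemma sum_sub_sum_le_discreteKL {p q : S → ℝ} (hp : ∀ s, 0 ≤ p s) (hq : ∀ s, 0 < q s) :
    ∑ s, p s - ∑ s, q s ≤ discreteKL p q := by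
  rw [← sum_sub_distrib]
  refine sum_le_sum fun s _ => ?_
  -- `q · klFun (p / q) = p log (p / q) + q - p`
  have hkl := mul_nonneg (hq s).le (InformationTheory.klFun_nonneg (div_nonneg (hp s) (hq s).le))
  have hq0 := (hq s).ne'
  rw [InformationTheory.klFun] at hkl
  field_simp at hkl
  linarith

lemma discreteKL_nonneg {p q : S → ℝ} (hp : ∀ s, 0 ≤ p s) (hq : ∀ s, 0 < q s)
    (hsum : ∑ s, p s = ∑ s, q s) : 0 ≤ discreteKL p q := by
  linarith [sum_sub_sum_le_discreteKL hp hq]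

lemma discreteKL_self (p : S → ℝ) : discreteKL p p = 0 := by
  simp [discreteKL]

lemma sum_mul_log_div_eq_discreteKL_sub {p q r : S → ℝ} (hp : ∀ s, 0 ≤ p s)
    (hq : ∀ s, 0 < q s) (hr : ∀ s, 0 < r s) :
    ∑ s, p s * Real.log (r s / q s) = discreteKL p q - discreteKL p r := by
  rw [discreteKL, discreteKL, ← sum_sub_distrib]
  refine sum_congr rfl fun s _ => ?_
  rcases (hp s).eq_or_lt with h0 | h0
  · simp [← h0]
  · rw [Real.log_div (hr s).ne' (hq s).ne', Real.log_div h0.ne' (hq s).ne',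
      Real.log_div h0.ne' (hr s).ne']
    ring

end KL

lemma Real.log_mul_exp_div_self {q : ℝ} (hq : q ≠ 0) (x : ℝ) :
    Real.log (q * Real.exp x / q) = x := by
  rw [mul_div_cancel_left₀ _ hq, Real.log_exp]

section Tilting

variable {S : Type*} [Fintype S] {q r v : S → ℝ} {κ ω : ℝ}

lemma sum_mul_eq_of_tilted (hκ : 0 < κ) (hq : ∀ s, 0 < q s)
    (hr : ∀ s, r s = q s * Real.exp (-(v s - ω) / κ))
    {p : S → ℝ} (hp : ∀ s, 0 ≤ p s) (hp_sum : ∑ s, p s = 1) :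
    ∑ s, p s * v s = ω - κ * (discreteKL p q - discreteKL p r) := by
  have hr_pos : ∀ s, 0 < r s := fun s => hr s ▸ mul_pos (hq s) (Real.exp_pos _)
  have hv : ∀ s, v s = ω - κ * Real.log (r s / q s) := fun s => by
    rw [hr, Real.log_mul_exp_div_self (hq s).ne']; field_simp; ring
  calc ∑ s, p s * v s = ∑ s, (p s * ω - κ * (p s * Real.log (r s / q s))) :=
        sum_congr rfl fun s _ => by rw [hv]; ring
    _ = ω - κ * ∑ s, p s * Real.log (r s / q s) := by
        rw [sum_sub_distrib, ← sum_mul, ← mul_sum, hp_sum, one_mul]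
    _ = ω - κ * (discreteKL p q - discreteKL p r) := by
        rw [sum_mul_log_div_eq_discreteKL_sub hp hq hr_pos]

lemma sum_tilted_mul_le (hκ : 0 < κ) (hq : ∀ s, 0 < q s)
    (hr : ∀ s, r s = q s * Real.exp (-(v s - ω) / κ)) (hr_sum : ∑ s, r s = 1)
    {p : S → ℝ} (hp : ∀ s, 0 ≤ p s) (hp_sum : ∑ s, p s = 1)
    (hKL : discreteKL p q ≤ discreteKL r q) :
    ∑ s, r s * v s ≤ ∑ s, p s * v s := by
  have hr_pos : ∀ s, 0 < r s := fun s => hr s ▸ mul_pos (hq s) (Real.exp_pos _)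
  have hgibbs : 0 ≤ discreteKL p r := discreteKL_nonneg hp hr_pos (hp_sum.trans hr_sum.symm)
  rw [sum_mul_eq_of_tilted hκ hq hr (fun s => (hr_pos s).le) hr_sum,
    sum_mul_eq_of_tilted hκ hq hr hp hp_sum, discreteKL_self, sub_zero]
  gcongr ω - κ * ?_
  linarith

end Tilting

section Bellman

variable {S A : Type*} [Fintype S] [Fintype A] {π : S → A → ℝ} {R : S → A → ℝ} {γ : ℝ}

lemma bellman_le_bellman_of_forall_sum_le (hπ : ∀ s a, 0 ≤ π s a) (hγ : 0 ≤ γ)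
    {P Q : S → A → S → ℝ} {v : S → ℝ}
    (h : ∀ s a, ∑ s', P s a s' * v s' ≤ ∑ s', Q s a s' * v s') (s : S) :
    bellman π R γ P v s ≤ bellman π R γ Q v s :=
  sum_le_sum fun a _ => by have := h s a; gcongr; exact hπ s a

lemma bellman_sub_bellman_le (hπ : ∀ s a, 0 ≤ π s a) (hπ_sum : ∀ s, ∑ a, π s a = 1)
    (hγ : 0 ≤ γ) {P : S → A → S → ℝ} (hP : ∀ s a s', 0 ≤ P s a s')
    (hP_sum : ∀ s a, ∑ s', P s a s' = 1) {u w : S → ℝ} {M : ℝ} (huw : ∀ s, u s - w s ≤ M)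
    (s : S) : bellman π R γ P u s - bellman π R γ P w s ≤ γ * M := by
  have hnext : ∀ a, ∑ s', P s a s' * u s' - ∑ s', P s a s' * w s' ≤ M := fun a =>
    calc ∑ s', P s a s' * u s' - ∑ s', P s a s' * w s'
        = ∑ s', P s a s' * (u s' - w s') := by simp only [mul_sub, sum_sub_distrib]
      _ ≤ ∑ s', P s a s' * M :=
          sum_le_sum fun s' _ => mul_le_mul_of_nonneg_left (huw s') (hP s a s')
      _ = M := by rw [← sum_mul, hP_sum, one_mul]
  calc bellman π R γ P u s - bellman π R γ P w s
      = ∑ a, π s a * (γ * (∑ s', P s a s' * u s' - ∑ s', P s a s' * w s')) := by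
        rw [bellman, bellman, ← sum_sub_distrib]
        exact sum_congr rfl fun a _ => by ring
    _ ≤ ∑ a, π s a * (γ * M) :=
        sum_le_sum fun a _ => mul_le_mul_of_nonneg_left
          (mul_le_mul_of_nonneg_left (hnext a) hγ) (hπ s a)
    _ = γ * M := by rw [← sum_mul, hπ_sum, one_mul]

lemma le_of_le_bellman_of_bellman_eq (hπ : ∀ s a, 0 ≤ π s a) (hπ_sum : ∀ s, ∑ a, π s a = 1)
    (hγ0 : 0 ≤ γ) (hγ1 : γ < 1) {P : S → A → S → ℝ} (hP : ∀ s a s', 0 ≤ P s a s')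
    (hP_sum : ∀ s a, ∑ s', P s a s' = 1) {v w : S → ℝ} (hv : ∀ s, v s ≤ bellman π R γ P v s)
    (hw : bellman π R γ P w = w) (s : S) : v s ≤ w s := by
  by_contra! hlt
  have : Nonempty S := ⟨s⟩
  obtain ⟨s₀, -, hmax⟩ := exists_max_image univ (fun s => v s - w s) univ_nonempty
  have hM : v s₀ - w s₀ ≤ γ * (v s₀ - w s₀) := by
    have := bellman_sub_bellman_le hπ hπ_sum hγ0 hP hP_sum (R := R)
      (fun s => hmax s (mem_univ s)) s₀
    rw [hw] at this
    linarith [hv s₀]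
  nlinarith [hmax s (mem_univ s)]

end Bellman

theorem kl_tilted_kernel_is_adversarial_general
    {S A : Type*} [Fintype S] [Fintype A]
    (π : S → A → ℝ) (hπ_nonneg : ∀ s a, 0 ≤ π s a) (hπ_sum : ∀ s, ∑ a, π s a = 1)
    (R : S → A → ℝ) (γ : ℝ) (hγ0 : 0 ≤ γ) (hγ1 : γ < 1)
    (Pbar : S → A → S → ℝ) (hPbar_pos : ∀ s a s', 0 < Pbar s a s')
    (β : S → A → ℝ)
    (𝒰 : Set (S → A → S → ℝ))
    (h𝒰 : 𝒰 = {P | (∀ s a s', 0 ≤ P s a s') ∧ (∀ s a, ∑ s', P s a s' = 1) ∧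
      ∀ s a, ∑ s', P s a s' * Real.log (P s a s' / Pbar s a s') ≤ β s a})
    (κ : S → A → ℝ) (hκ : ∀ s a, 0 < κ s a) (ω : S → A → ℝ) (vstar : S → ℝ)
    (Pstar : S → A → S → ℝ)
    (hPstar_def : ∀ s a s',
      Pstar s a s' = Pbar s a s' * Real.exp (-(vstar s' - ω s a) / κ s a))
    (hPstar_sum : ∀ s a, ∑ s', Pstar s a s' = 1)
    (hPstar_kl : ∀ s a,
      ∑ s', Pstar s a s' * (-(vstar s' - ω s a) / κ s a) = β s a)
    (hfix : bellman π R γ Pstar vstar = vstar) :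
    Pstar ∈ 𝒰 ∧
      ∀ P ∈ 𝒰, ∀ w : S → ℝ, bellman π R γ P w = w →
        (∀ s, vstar s ≤ w s) ∧
          ∀ μ : S → ℝ, (∀ s, 0 ≤ μ s) → (∑ s, μ s = 1) →
            ∑ s, μ s * vstar s ≤ ∑ s, μ s * w s := by
  subst h𝒰
  have hKL_star : ∀ s a, discreteKL (Pstar s a) (Pbar s a) = β s a := fun s a => by
    rw [← hPstar_kl, discreteKL]
    exact sum_congr rfl fun s' _ => by
      rw [hPstar_def, Real.log_mul_exp_div_self (hPbar_pos s a s').ne']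
  have hPstar_nonneg : ∀ s a s', 0 ≤ Pstar s a s' := fun s a s' =>
    hPstar_def s a s' ▸ (mul_pos (hPbar_pos s a s') (Real.exp_pos _)).le
  refine ⟨⟨hPstar_nonneg, hPstar_sum, fun s a => (hKL_star s a).le⟩, ?_⟩
  rintro P ⟨hP, hP_sum, hP_kl⟩ w hw
  have hstep : ∀ s, vstar s ≤ bellman π R γ P vstar s := fun s => by
    conv_lhs => rw [← hfix]
    exact bellman_le_bellman_of_forall_sum_le hπ_nonneg hγ0 (fun s a =>
      sum_tilted_mul_le (hκ s a) (hPbar_pos s a) (hPstar_def s a) (hPstar_sum s a) (hP s a)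
        (hP_sum s a) ((hP_kl s a).trans (hKL_star s a).ge)) s
  have hle : ∀ s, vstar s ≤ w s :=
    le_of_le_bellman_of_bellman_eq hπ_nonneg hπ_sum hγ0 hγ1 hP hP_sum hstep hw
  exact ⟨hle, fun μ hμ _ => sum_le_sum fun s _ => mul_le_mul_of_nonneg_left (hle s) (hμ s)⟩

/-- For the sa-rectangular KL uncertainty set around a positive nominal
kernel, the exponentially tilted kernel
`P*(s'|s,a) = P̄(s'|s,a)·exp(−(v*(s')−ω(s,a))/κ(s,a))` (normalized, with KL divergence
`β(s,a)` in every state-action pair, and with `v*` its Bellman fixed point) belongs to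
the uncertainty set and is an adversarial (worst-case) kernel: its value function is a
componentwise lower bound on the value function of any kernel in the set, hence also
minimizes the return for every initial distribution `μ`. -/
theorem kl_tilted_kernel_is_adversarial
    {S A : Type*} [Fintype S] [Nonempty S] [Fintype A] [Nonempty A]
    (π : S → A → ℝ) (hπ_nonneg : ∀ s a, 0 ≤ π s a) (hπ_sum : ∀ s, ∑ a, π s a = 1)
    (R : S → A → ℝ) (γ : ℝ) (hγ0 : 0 ≤ γ) (hγ1 : γ < 1)
    (Pbar : S → A → S → ℝ) (hPbar_pos : ∀ s a s', 0 < Pbar s a s')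
    (hPbar_sum : ∀ s a, ∑ s', Pbar s a s' = 1)
    (β : S → A → ℝ) (hβ : ∀ s a, 0 ≤ β s a)
    (𝒰 : Set (S → A → S → ℝ))
    (h𝒰 : 𝒰 = {P | (∀ s a s', 0 ≤ P s a s') ∧ (∀ s a, ∑ s', P s a s' = 1) ∧
      ∀ s a, ∑ s', P s a s' * Real.log (P s a s' / Pbar s a s') ≤ β s a})
    (κ : S → A → ℝ) (hκ : ∀ s a, 0 < κ s a) (ω : S → A → ℝ) (vstar : S → ℝ)
    (Pstar : S → A → S → ℝ)
    (hPstar_def : ∀ s a s',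
      Pstar s a s' = Pbar s a s' * Real.exp (-(vstar s' - ω s a) / κ s a))
    (hPstar_sum : ∀ s a, ∑ s', Pstar s a s' = 1)
    (hPstar_kl : ∀ s a,
      ∑ s', Pstar s a s' * (-(vstar s' - ω s a) / κ s a) = β s a)
    (hfix : bellman π R γ Pstar vstar = vstar) :
    Pstar ∈ 𝒰 ∧
      ∀ P ∈ 𝒰, ∀ w : S → ℝ, bellman π R γ P w = w →
        (∀ s, vstar s ≤ w s) ∧
          ∀ μ : S → ℝ, (∀ s, 0 ≤ μ s) → (∑ s, μ s = 1) →
            ∑ s, μ s * vstar s ≤ ∑ s, μ s * w s :=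
  kl_tilted_kernel_is_adversarial_general π hπ_nonneg hπ_sum R γ hγ0 hγ1 Pbar hPbar_pos β 𝒰 h𝒰 κ hκ
    ω vstar Pstar hPstar_def hPstar_sum hPstar_kl hfix
end

section
/- Let S be a nonempty finite set, q a probability distribution on S with q(s) > 0 for all s, v : S → ℝ, β ≥ 0, κ > 0 and ω ∈ ℝ. Define p(s) = q(s)·exp(−(v(s)−ω)/κ), and suppose ∑_{s∈S} p(s) = 1 and ∑_{s∈S} p(s)·(−(v(s)−ω)/κ) = β. Then ∑_{s∈S} p(s)·v(s) = ω − κ·β, and ω − κ·β ≤ ∑_{s∈S} p'(s)·v(s) for every probability distribution p' on S with D(p'‖q) ≤ β; that is, the minimum of the expected value over the KL ball of radius β around q equals ω − κ·β. -/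
/-! The tilted distribution satisfies `v = ω - κ · log (p / q)` pointwise, so for every probability
vector `p'` the expected value of `v` is `ω - κ · ∑ p' log (p / q)`. Under `p` itself the last sum
is `β`; for any other `p'` Gibbs' inequality bounds it by `D(p'‖q)`, which is at most `β` on the
KL ball. -/

open Real Finset

lemma mul_log_div_le_sub {a b : ℝ} (ha : 0 ≤ a) (hb : 0 < b) : a * log (b / a) ≤ b - a := by
  rcases ha.eq_or_lt with rfl | ha
  · simpa using hb.le
  · calc a * log (b / a) ≤ a * (b / a - 1) :=
          mul_le_mul_of_nonneg_left (log_le_sub_one_of_pos (div_pos hb ha)) ha.le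
      _ = b - a := by field_simp

lemma mul_log_div_le_mul_log_div_add_sub {a b c : ℝ} (ha : 0 ≤ a) (hb : 0 < b) (hc : 0 < c) :
    a * log (b / c) ≤ a * log (a / c) + (b - a) := by
  rcases ha.eq_or_lt with rfl | ha
  · simpa using hb.le
  · have hsplit : log (b / c) = log (a / c) + log (b / a) := by
      rw [← log_mul (div_pos ha hc).ne' (div_pos hb ha).ne']
      congr 1
      field_simp
    rw [hsplit, mul_add]
    linarith [mul_log_div_le_sub ha.le hb]

lemma sum_mul_log_div_le_sum_mul_log_div {ι : Type*} (s : Finset ι) {p p' q : ι → ℝ}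
    (hp' : ∀ i ∈ s, 0 ≤ p' i) (hp : ∀ i ∈ s, 0 < p i) (hq : ∀ i ∈ s, 0 < q i)
    (hsum : ∑ i ∈ s, p i ≤ ∑ i ∈ s, p' i) :
    ∑ i ∈ s, p' i * log (p i / q i) ≤ ∑ i ∈ s, p' i * log (p' i / q i) :=
  calc ∑ i ∈ s, p' i * log (p i / q i)
      ≤ ∑ i ∈ s, (p' i * log (p' i / q i) + (p i - p' i)) :=
        sum_le_sum fun i hi => mul_log_div_le_mul_log_div_add_sub (hp' i hi) (hp i hi) (hq i hi)
    _ = ∑ i ∈ s, p' i * log (p' i / q i) + (∑ i ∈ s, p i - ∑ i ∈ s, p' i) := by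
        rw [sum_add_distrib, sum_sub_distrib]
    _ ≤ ∑ i ∈ s, p' i * log (p' i / q i) := by linarith

lemma sum_mul_eq_sub_mul_sum_of_eq_sub_mul {ι : Type*} (s : Finset ι) {w v r : ι → ℝ} {ω κ : ℝ}
    (hv : ∀ i ∈ s, v i = ω - κ * r i) (hw : ∑ i ∈ s, w i = 1) :
    ∑ i ∈ s, w i * v i = ω - κ * ∑ i ∈ s, w i * r i := by
  calc ∑ i ∈ s, w i * v i = ∑ i ∈ s, (w i * ω - κ * (w i * r i)) :=
        sum_congr rfl fun i hi => by rw [hv i hi]; ring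
    _ = (∑ i ∈ s, w i) * ω - κ * ∑ i ∈ s, w i * r i := by rw [sum_sub_distrib, sum_mul, mul_sum]
    _ = ω - κ * ∑ i ∈ s, w i * r i := by rw [hw, one_mul]

theorem tilted_expected_value_eq_and_min_over_KL_ball_general
    {S : Type*} [Fintype S]
    (q : S → ℝ) (hq_pos : ∀ s, 0 < q s)
    (v : S → ℝ) (β : ℝ) (κ : ℝ) (hκ : 0 < κ) (ω : ℝ)
    (p : S → ℝ) (hp_def : ∀ s, p s = q s * Real.exp (-(v s - ω) / κ))
    (hp_sum : ∑ s, p s = 1)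
    (hp_kl : ∑ s, p s * (-(v s - ω) / κ) = β) :
    (∑ s, p s * v s = ω - κ * β) ∧
      ∀ p' : S → ℝ, (∀ s, 0 ≤ p' s) → (∑ s, p' s = 1) →
        (∑ s, p' s * Real.log (p' s / q s) ≤ β) →
        ω - κ * β ≤ ∑ s, p' s * v s := by
  have hlog : ∀ s, log (p s / q s) = -(v s - ω) / κ := fun s => by
    rw [hp_def, mul_div_cancel_left₀ _ (hq_pos s).ne', log_exp]
  have hv : ∀ s ∈ univ, v s = ω - κ * log (p s / q s) := fun s _ => by
    rw [hlog]; field_simp; ring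
  have hp_pos : ∀ s ∈ univ, 0 < p s := fun s _ => hp_def s ▸ mul_pos (hq_pos s) (exp_pos _)
  refine ⟨?_, fun p' hp' hp'_sum hp'_kl => ?_⟩
  · rw [sum_mul_eq_sub_mul_sum_of_eq_sub_mul univ hv hp_sum, ← hp_kl]
    simp_rw [hlog]
  · have hcross : ∑ s, p' s * log (p s / q s) ≤ β :=
      (sum_mul_log_div_le_sum_mul_log_div univ (fun s _ => hp' s) hp_pos
        (fun s _ => hq_pos s) (by rw [hp_sum, hp'_sum])).trans hp'_kl
    rw [sum_mul_eq_sub_mul_sum_of_eq_sub_mul univ hv hp'_sum]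
    exact sub_le_sub_left (mul_le_mul_of_nonneg_left hcross hκ.le) ω

/-- For the tilted distribution `p(s) = q(s)·exp(−(v(s)−ω)/κ)` (normalized,
with KL divergence `β` from `q`), the expected value equals `ω − κ·β`, and `ω − κ·β`
lower-bounds the expected value over the whole KL ball of radius `β` around `q`. -/
theorem tilted_expected_value_eq_and_min_over_KL_ball
    {S : Type*} [Fintype S] [Nonempty S]
    (q : S → ℝ) (hq_pos : ∀ s, 0 < q s) (hq_sum : ∑ s, q s = 1)
    (v : S → ℝ) (β : ℝ) (hβ : 0 ≤ β) (κ : ℝ) (hκ : 0 < κ) (ω : ℝ)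
    (p : S → ℝ) (hp_def : ∀ s, p s = q s * Real.exp (-(v s - ω) / κ))
    (hp_sum : ∑ s, p s = 1)
    (hp_kl : ∑ s, p s * (-(v s - ω) / κ) = β) :
    (∑ s, p s * v s = ω - κ * β) ∧
      ∀ p' : S → ℝ, (∀ s, 0 ≤ p' s) → (∑ s, p' s = 1) →
        (∑ s, p' s * Real.log (p' s / q s) ≤ β) →
        ω - κ * β ≤ ∑ s, p' s * v s :=
  tilted_expected_value_eq_and_min_over_KL_ball_general q hq_pos v β κ hκ ω p hp_def hp_sum hp_kl
end

section
/- Let S and A be nonempty finite sets, π a policy, R : S×A → ℝ, γ ∈ [0,1), and P a transition kernel. Define the matrix M(s,s') = ∑_{a∈A} π(a|s)·P(s'|s,a) and the vector r(s) = ∑_{a∈A} π(a|s)·R(s,a). Then the matrix I − γ·M is invertible, and any v : S → ℝ with T_P v = v satisfies v = (I − γ·M)^{-1} r (where the inverse matrix is applied to the vector r). -/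
/-- With `M(s,s') = ∑ a, π(a|s)·P(s'|s,a)` and `r(s) = ∑ a, π(a|s)·R(s,a)`,
the matrix `I − γ·M` is invertible and any Bellman fixed point `v` satisfies
`v = (I − γ·M)⁻¹ r`. -/
theorem bellman_fixed_point_eq_resolvent_mulVec
    {S A : Type*} [Fintype S] [Nonempty S] [DecidableEq S] [Fintype A] [Nonempty A]
    (π : S → A → ℝ) (hπ_nonneg : ∀ s a, 0 ≤ π s a) (hπ_sum : ∀ s, ∑ a, π s a = 1)
    (R : S → A → ℝ) (γ : ℝ) (hγ0 : 0 ≤ γ) (hγ1 : γ < 1)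
    (P : S → A → S → ℝ) (hP_nonneg : ∀ s a s', 0 ≤ P s a s')
    (hP_sum : ∀ s a, ∑ s', P s a s' = 1)
    (M : Matrix S S ℝ) (hM : ∀ s s', M s s' = ∑ a, π s a * P s a s')
    (r : S → ℝ) (hr : ∀ s, r s = ∑ a, π s a * R s a) :
    IsUnit (1 - γ • M) ∧
      ∀ v : S → ℝ, bellman π R γ P v = v → v = (1 - γ • M)⁻¹.mulVec r := by
  have hMnn : ∀ s s', 0 ≤ M s s' := by
    intro s s'
    rw [hM]
    exact Finset.sum_nonneg fun a _ => mul_nonneg (hπ_nonneg s a) (hP_nonneg s a s')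
  have hMrow : ∀ s, ∑ s', M s s' = 1 := by
    intro s
    simp only [hM]
    rw [Finset.sum_comm]
    simp only [← Finset.mul_sum, hP_sum, mul_one, hπ_sum]
  -- key: kernel of (1 - γ•M) is trivial
  have hker : ∀ x : S → ℝ, (1 - γ • M).mulVec x = 0 → x = 0 := by
    intro x hx
    have hMx : ∀ s, x s = γ * ∑ s', M s s' * x s' := by
      intro s
      have h := congrFun hx s
      simp only [Matrix.sub_mulVec, Matrix.smul_mulVec, Pi.sub_apply, Pi.smul_apply,
        Matrix.one_mulVec, smul_eq_mul, Pi.zero_apply, sub_eq_zero] at h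
      rw [h]; rfl
    by_contra hne
    obtain ⟨s0, hs0⟩ := Finset.exists_max_image Finset.univ (fun s => |x s|)
      (by simp [Finset.univ_nonempty])
    obtain ⟨-, hs0max⟩ := hs0
    have hpos : 0 < |x s0| := by
      rcases Function.ne_iff.mp hne with ⟨s, hs⟩
      exact lt_of_lt_of_le (abs_pos.mpr hs) (hs0max s (Finset.mem_univ s))
    have : |x s0| ≤ γ * |x s0| := by
      calc |x s0| = |γ * ∑ s', M s0 s' * x s'| := by rw [← hMx]
        _ = γ * |∑ s', M s0 s' * x s'| := by rw [abs_mul, abs_of_nonneg hγ0]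
        _ ≤ γ * ∑ s', |M s0 s' * x s'| :=
            mul_le_mul_of_nonneg_left (Finset.abs_sum_le_sum_abs _ _) hγ0
        _ ≤ γ * ∑ s', M s0 s' * |x s0| := by
            apply mul_le_mul_of_nonneg_left _ hγ0
            apply Finset.sum_le_sum
            intro s' _
            rw [abs_mul, abs_of_nonneg (hMnn s0 s')]
            exact mul_le_mul_of_nonneg_left (hs0max s' (Finset.mem_univ s')) (hMnn s0 s')
        _ = γ * |x s0| := by rw [← Finset.sum_mul, hMrow, one_mul]
    nlinarith
  have hdet : (1 - γ • M).det ≠ 0 := by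
    intro h
    obtain ⟨x, hx0, hx⟩ := (Matrix.exists_mulVec_eq_zero_iff).mpr h
    exact hx0 (hker x hx)
  have hunit : IsUnit (1 - γ • M) :=
    (Matrix.isUnit_iff_isUnit_det _).mpr (isUnit_iff_ne_zero.mpr hdet)
  refine ⟨hunit, ?_⟩
  intro v hv
  have key : (1 - γ • M).mulVec v = r := by
    funext s
    have hvs := congrFun hv s
    simp only [bellman] at hvs
    have expand : ∑ a, π s a * (R s a + γ * ∑ s', P s a s' * v s')
        = r s + γ * ∑ s', M s s' * v s' := by
      rw [hr]
      simp only [mul_add, Finset.sum_add_distrib]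
      congr 1
      simp only [hM, Finset.sum_mul, Finset.mul_sum]
      rw [Finset.sum_comm]
      congr 1; funext a
      congr 1; funext s'
      ring
    rw [expand] at hvs
    simp only [Matrix.sub_mulVec, Matrix.smul_mulVec, Matrix.one_mulVec,
      Pi.sub_apply, Pi.smul_apply, smul_eq_mul]
    have : (M.mulVec v) s = ∑ s', M s s' * v s' := rfl
    rw [this]
    linarith
  rw [← key, Matrix.mulVec_mulVec, Matrix.nonsing_inv_mul _ (isUnit_iff_ne_zero.mpr hdet),
    Matrix.one_mulVec]
end
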